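/- The map K_p : (w_1, ..., w_p) ↦ (w_1, w_1 w_2, ..., w_1 w_2 ··· w_p) satisfies dK_p · Ω^{m̃k}_p · (dK_p)^T = Ω^{sG}_p|_{f = K_p(w)}, hence is a Poisson map from the tridiagonal bracket to the sine-Gordon bracket: {g∘K_p, h∘K_p}_w = {g,h}_f at f = K_p(w). -/

import Mathlib

/-!
By the chain rule the partial derivatives of `g ∘ K` are those of `g` multiplied by the Jacobian
`dK`, so the pulled-back bracket is the bracket of `dK · Ω^{m̃k} · dKᵀ`, and everything rests on
this matrix identity. With `D = diag w` and `N` the superdiagonal shift, `Ω^{m̃k} = D (N - Nᵀ) D`;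
since `w_i ∂K_a/∂w_i = K_a` for `i ≤ a`, `dK · D = diag(K) · L` with `L` the lower-triangular
all-ones matrix. The `(a, b)` entry of `L N Lᵀ` is `#{i | i ≤ a ∧ i < b}`, so `L (N - Nᵀ) Lᵀ` is the
sign matrix `sgn (b - a)`, and `diag(f) · sgn · diag(f) = Ω^{sG}` at `f = K(w)`.
-/

open Matrix

/-- Poisson-type bracket associated with a matrix `Ω`:
`{g,h} = ∇g · Ω · (∇h)ᵀ = Σ_{i,j} Ω_{ij} ∂g/∂x_i ∂h/∂x_j`. -/
noncomputable def gradBracket {m : ℕ} (Ω : Matrix (Fin m) (Fin m) ℝ)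
    (g h : (Fin m → ℝ) → ℝ) (x : Fin m → ℝ) : ℝ :=
  ∑ i, ∑ j, Ω i j * fderiv ℝ g x (Pi.single i 1) * fderiv ℝ h x (Pi.single j 1)

/-- `K_p : (w_1, …, w_p) ↦ (w_1, w_1 w_2, …, w_1 w_2 ⋯ w_p)`. -/
def Kmap (p : ℕ) (w : Fin p → ℝ) (i : Fin p) : ℝ :=
  ∏ j ∈ Finset.univ.filter (· ≤ i), w j

/-- `Ω^{m̃k}_p`: the antisymmetric tridiagonal matrix with `(i,i+1)`-entry `w_i w_{i+1}`. -/
def OmegaMKtilde (p : ℕ) (w : Fin p → ℝ) : Matrix (Fin p) (Fin p) ℝ := fun i j =>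
  if (j : ℕ) = (i : ℕ) + 1 then w i * w j
  else if (i : ℕ) = (j : ℕ) + 1 then -(w i * w j)
  else 0

/-- `Ω^{sG}_p`: antisymmetric, `(i,j)`-entry `f_i f_j` for `j > i`. -/
def OmegaSG (p : ℕ) (f : Fin p → ℝ) : Matrix (Fin p) (Fin p) ℝ := fun i j =>
  if i < j then f i * f j else if j < i then -(f i * f j) else 0

/-- The Jacobian matrix of `K_p`: entry `(i,j)` is `(w_1 ⋯ w_i)/w_j` for `j ≤ i`, else `0`. -/
noncomputable def dKmap (p : ℕ) (w : Fin p → ℝ) : Matrix (Fin p) (Fin p) ℝ := fun i j =>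
  if j ≤ i then (∏ k ∈ Finset.univ.filter (· ≤ i), w k) * (w j)⁻¹ else 0

open Finset

noncomputable def partialDerivs {m : ℕ} (g : (Fin m → ℝ) → ℝ) (x : Fin m → ℝ) : Fin m → ℝ :=
  fun i => fderiv ℝ g x (Pi.single i 1)

noncomputable def jacobianMatrix {m n : ℕ} (F : (Fin m → ℝ) → Fin n → ℝ) (x : Fin m → ℝ) :
    Matrix (Fin n) (Fin m) ℝ :=
  LinearMap.toMatrix' (fderiv ℝ F x : (Fin m → ℝ) →ₗ[ℝ] Fin n → ℝ)

lemma gradBracket_eq_dotProduct {m : ℕ} (Ω : Matrix (Fin m) (Fin m) ℝ)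
    (g h : (Fin m → ℝ) → ℝ) (x : Fin m → ℝ) :
    gradBracket Ω g h x = partialDerivs g x ⬝ᵥ (Ω *ᵥ partialDerivs h x) := by
  simp only [gradBracket, partialDerivs, dotProduct, mulVec, mul_sum]
  exact sum_congr rfl fun i _ => sum_congr rfl fun j _ => by ring

lemma linearMap_apply_eq_dotProduct {R n : Type*} [CommSemiring R] [Fintype n] [DecidableEq n]
    (L : (n → R) →ₗ[R] R) (v : n → R) :
    L v = (fun a => L (Pi.single a 1)) ⬝ᵥ v := by
  rw [LinearMap.pi_apply_eq_sum_univ, dotProduct]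
  refine sum_congr rfl fun a _ => ?_
  rw [smul_eq_mul, mul_comm]
  congr 2
  ext j
  simp [Pi.single_apply, eq_comm]

lemma partialDerivs_comp {m n : ℕ} {F : (Fin m → ℝ) → Fin n → ℝ} {g : (Fin n → ℝ) → ℝ}
    {w : Fin m → ℝ} (hg : DifferentiableAt ℝ g (F w)) (hF : DifferentiableAt ℝ F w) :
    partialDerivs (fun v => g (F v)) w =
      partialDerivs g (F w) ᵥ* jacobianMatrix F w := by
  ext i
  rw [partialDerivs, fderiv_fun_comp w hg hF, ContinuousLinearMap.comp_apply, vecMul,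
    ← ContinuousLinearMap.coe_coe, linearMap_apply_eq_dotProduct]
  simp only [dotProduct, jacobianMatrix, LinearMap.toMatrix'_apply, partialDerivs,
    ContinuousLinearMap.coe_coe]

lemma gradBracket_comp {m n : ℕ} (Ω : Matrix (Fin m) (Fin m) ℝ) {F : (Fin m → ℝ) → Fin n → ℝ}
    {g h : (Fin n → ℝ) → ℝ} {w : Fin m → ℝ} (hF : DifferentiableAt ℝ F w)
    (hg : DifferentiableAt ℝ g (F w)) (hh : DifferentiableAt ℝ h (F w)) :
    gradBracket Ω (fun v => g (F v)) (fun v => h (F v)) w =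
      gradBracket (jacobianMatrix F w * Ω * (jacobianMatrix F w)ᵀ) g h (F w) := by
  rw [gradBracket_eq_dotProduct, gradBracket_eq_dotProduct, partialDerivs_comp hg hF,
    partialDerivs_comp hh hF, ← dotProduct_mulVec, ← mulVec_transpose, mulVec_mulVec,
    mulVec_mulVec, Matrix.mul_assoc]

section SignMatrix

variable (R : Type*) [CommRing R] (p : ℕ)

def lowerTriOnes : Matrix (Fin p) (Fin p) R := fun a i => if i ≤ a then 1 else 0

def superdiagOnes : Matrix (Fin p) (Fin p) R := fun i j => if (j : ℕ) = i + 1 then 1 else 0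

def signMatrix : Matrix (Fin p) (Fin p) R := fun a b => if a < b then 1 else if b < a then -1 else 0

variable {R p}

lemma superdiagOnes_mul_lowerTriOnes_transpose_apply (i b : Fin p) :
    (superdiagOnes R p * (lowerTriOnes R p)ᵀ) i b = if i < b then 1 else 0 := by
  rw [mul_apply]
  by_cases hib : i < b
  · have hi : (i : ℕ) + 1 < p := by have := b.isLt; rw [Fin.lt_def] at hib; omega
    rw [sum_eq_single ⟨i + 1, hi⟩]
    · simp [superdiagOnes, lowerTriOnes, hib, Fin.le_def]
    · intro j _ hj
      simp [superdiagOnes, Fin.ext_iff.not.mp hj]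
    · simp
  · rw [if_neg hib]
    refine sum_eq_zero fun j _ => ?_
    simp only [superdiagOnes, lowerTriOnes, transpose_apply, ite_zero_mul_ite_zero]
    rw [if_neg]
    grind

lemma lowerTriOnes_mul_superdiagOnes_mul_transpose_apply (a b : Fin p) :
    (lowerTriOnes R p * superdiagOnes R p * (lowerTriOnes R p)ᵀ) a b =
      ∑ i, if i ≤ a ∧ i < b then 1 else 0 := by
  simp only [Matrix.mul_assoc, mul_apply (M := lowerTriOnes R p),
    superdiagOnes_mul_lowerTriOnes_transpose_apply, lowerTriOnes, ite_zero_mul_ite_zero, mul_one]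

lemma lowerTriOnes_mul_skew_mul_transpose :
    lowerTriOnes R p * (superdiagOnes R p - (superdiagOnes R p)ᵀ) * (lowerTriOnes R p)ᵀ =
      signMatrix R p := by
  have hT : lowerTriOnes R p * (superdiagOnes R p)ᵀ * (lowerTriOnes R p)ᵀ =
      (lowerTriOnes R p * superdiagOnes R p * (lowerTriOnes R p)ᵀ)ᵀ := by
    simp only [transpose_mul, transpose_transpose, Matrix.mul_assoc]
  ext a b
  rw [Matrix.mul_sub, Matrix.sub_mul, hT, Matrix.sub_apply, transpose_apply,
    lowerTriOnes_mul_superdiagOnes_mul_transpose_apply,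
    lowerTriOnes_mul_superdiagOnes_mul_transpose_apply, ← sum_sub_distrib]
  have hpt : ∀ i : Fin p, ((if i ≤ a ∧ i < b then 1 else 0) - if i ≤ b ∧ i < a then 1 else 0 : R) =
      (if a = i then (if a < b then 1 else 0) else 0) -
        (if b = i then (if b < a then 1 else 0) else 0) := by
    intro i
    split_ifs <;> grind
  rw [sum_congr rfl fun i _ => hpt i, sum_sub_distrib, sum_ite_eq, sum_ite_eq, if_pos (mem_univ a),
    if_pos (mem_univ b), signMatrix]
  split_ifs <;> grind

end SignMatrix

lemma OmegaMKtilde_eq_diagonal_mul (p : ℕ) (w : Fin p → ℝ) :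
    OmegaMKtilde p w = diagonal w * (superdiagOnes ℝ p - (superdiagOnes ℝ p)ᵀ) * diagonal w := by
  ext i j
  simp only [OmegaMKtilde, mul_diagonal, diagonal_mul, Matrix.sub_apply, transpose_apply,
    superdiagOnes]
  split_ifs <;> grind

lemma OmegaSG_eq_diagonal_mul (p : ℕ) (f : Fin p → ℝ) :
    OmegaSG p f = diagonal f * signMatrix ℝ p * diagonal f := by
  ext i j
  simp only [OmegaSG, mul_diagonal, diagonal_mul, signMatrix]
  split_ifs <;> ring

lemma dKmap_mul_diagonal {p : ℕ} {w : Fin p → ℝ} (hw : ∀ i, w i ≠ 0) :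
    dKmap p w * diagonal w = diagonal (Kmap p w) * lowerTriOnes ℝ p := by
  ext a i
  simp only [dKmap, Kmap, mul_diagonal, diagonal_mul, lowerTriOnes]
  split_ifs
  · field_simp [hw i]
  · simp

lemma dKmap_mul_OmegaMKtilde_mul_transpose {p : ℕ} {w : Fin p → ℝ} (hw : ∀ i, w i ≠ 0) :
    dKmap p w * OmegaMKtilde p w * (dKmap p w)ᵀ = OmegaSG p (Kmap p w) := by
  let N := superdiagOnes ℝ p
  calc dKmap p w * OmegaMKtilde p w * (dKmap p w)ᵀ
      = (dKmap p w * diagonal w) * (N - Nᵀ) * (dKmap p w * diagonal w)ᵀ := by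
        simp only [OmegaMKtilde_eq_diagonal_mul, transpose_mul, diagonal_transpose,
          Matrix.mul_assoc, N]
    _ = diagonal (Kmap p w) * (lowerTriOnes ℝ p * (N - Nᵀ) * (lowerTriOnes ℝ p)ᵀ) *
          diagonal (Kmap p w) := by
        simp only [dKmap_mul_diagonal hw, transpose_mul, diagonal_transpose, Matrix.mul_assoc]
    _ = OmegaSG p (Kmap p w) := by
        rw [lowerTriOnes_mul_skew_mul_transpose, OmegaSG_eq_diagonal_mul]

lemma hasFDerivAt_Kmap (p : ℕ) (w : Fin p → ℝ) :
    HasFDerivAt (Kmap p)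
      (ContinuousLinearMap.pi fun a => ∑ j ∈ univ.filter (· ≤ a),
        (∏ k ∈ (univ.filter (· ≤ a)).erase j, w k) •
          (ContinuousLinearMap.proj j : (Fin p → ℝ) →L[ℝ] ℝ)) w :=
  hasFDerivAt_pi.2 fun _ => hasFDerivAt_finsetProd

lemma jacobianMatrix_Kmap {p : ℕ} {w : Fin p → ℝ} (hw : ∀ i, w i ≠ 0) :
    jacobianMatrix (Kmap p) w = dKmap p w := by
  ext a i
  rw [jacobianMatrix, (hasFDerivAt_Kmap p w).fderiv, LinearMap.toMatrix'_apply]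
  simp only [ContinuousLinearMap.coe_pi, ContinuousLinearMap.toLinearMap_sum,
    ContinuousLinearMap.toLinearMap_smul, ContinuousLinearMap.coe_proj, LinearMap.pi_apply,
    LinearMap.coe_sum, LinearMap.coe_smul, LinearMap.coe_proj, Finset.sum_apply, Pi.smul_apply,
    Function.eval, Pi.single_apply, smul_eq_mul, mul_ite, mul_one, mul_zero, sum_ite_eq',
    mem_filter, mem_univ, true_and, dKmap]
  split_ifs with hia
  · rw [← mul_prod_erase _ w (mem_filter.2 ⟨mem_univ i, hia⟩)]
    field_simp [hw i]
  · rfl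

/-- `K_p` satisfies `dK_p · Ω^{m̃k}_p · (dK_p)ᵀ = Ω^{sG}_p|_{f=K_p(w)}`, hence is a Poisson map
from the tridiagonal bracket to the sine-Gordon bracket:
`{g∘K_p, h∘K_p}_w = {g,h}_f` at `f = K_p(w)`. -/
theorem Kmap_poisson (p : ℕ) (w : Fin p → ℝ) (hw : ∀ i, w i ≠ 0) (g h : (Fin p → ℝ) → ℝ)
    (hg : DifferentiableAt ℝ g (Kmap p w)) (hh : DifferentiableAt ℝ h (Kmap p w)) :
    dKmap p w * OmegaMKtilde p w * (dKmap p w)ᵀ = OmegaSG p (Kmap p w) ∧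
    gradBracket (OmegaMKtilde p w) (fun v => g (Kmap p v)) (fun v => h (Kmap p v)) w =
      gradBracket (OmegaSG p (Kmap p w)) g h (Kmap p w) := by
  have hK := dKmap_mul_OmegaMKtilde_mul_transpose hw
  refine ⟨hK, ?_⟩
  rw [gradBracket_comp _ (hasFDerivAt_Kmap p w).differentiableAt hg hh, jacobianMatrix_Kmap hw,
    hK]
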